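/- For all n ∈ ℕ and all 0 ≤ i, j ≤ n, the entries of the matrix L^{-1} (the weight matrix of the L-type network of order n under the inverse weighting) satisfy the closed-form formula L^{-1}[i,j] = (−1)^{i−j} Σ_{α ∈ Q^{SD}_{i,j}} ∏_{s=j}^{i−1} t_{s+1, α_{i−s}} (where the empty sum is 0 and the empty product is 1). -/
import Mathlib


/-- The heights of an `L^m_n`-path of order `n` (the abscissas `x i = m + i` are
determined, so only the heights `y i ∈ {0, …, n}`, encoded as `Fin (n+1)`, are recorded):
`y (k+1) ∈ {y k, y k - 1}` and a fall step at position `k` forces `y k ≥ n - k`. -/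
def IsLPath (n : ℕ) (y : Fin (n + 1) → Fin (n + 1)) : Prop :=
  ∀ k : Fin n,
    ((y k.succ = y k.castSucc ∨ (y k.succ : ℕ) + 1 = (y k.castSucc : ℕ)) ∧
      ((y k.succ : ℕ) + 1 = (y k.castSucc : ℕ) → n - (k : ℕ) ≤ (y k.castSucc : ℕ)))

/-- The inverse weighting of an `L`-type path: a fall step from `(k, j)` to
`(k+1, j-1)` has weight `-t j (n - k - 1)` and a horizontal step has weight `1`; the
weight of the path is the product of the weights of its steps. -/
def linvweight {R : Type*} [CommRing R] (n : ℕ) (t : ℕ → ℕ → R)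
    (y : Fin (n + 1) → Fin (n + 1)) : R :=
  ∏ k : Fin n,
    if (y k.succ : ℕ) + 1 = (y k.castSucc : ℕ)
    then -t (y k.castSucc : ℕ) (n - (k : ℕ) - 1) else 1

open scoped Classical in
/-- The matrix `L⁻¹`: its `(i, j)` entry is the sum of the inverse weights of all
`L^0_n`-paths with `y 0 = i` and `y n = j`. -/
noncomputable def LinvMat {R : Type*} [CommRing R] (n : ℕ) (t : ℕ → ℕ → R) :
    Matrix (Fin (n + 1)) (Fin (n + 1)) R :=
  Matrix.of fun i j =>
    ∑ y ∈ Finset.univ.filter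
        (fun y : Fin (n + 1) → Fin (n + 1) => IsLPath n y ∧ y 0 = i ∧ y (Fin.last n) = j),
      linvweight n t y

open scoped Classical in
/-- `Q^{SD}_{i,j}`: for `i ≥ j`, the strictly decreasing sequences `α₁ > … > α_{i-j}` of
nonnegative integers with `αᵣ ≤ i - r` (here zero-indexed, so `α k ≤ i - (k+1)`; the
values are encoded in `Fin (i+1)`); for `i = j` only the empty sequence, and for `i < j`
the empty set. -/
noncomputable def QSDset (i j : ℕ) : Finset (Fin (i - j) → Fin (i + 1)) :=
  if j ≤ i then
    Finset.univ.filter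
      (fun α => StrictAnti α ∧ ∀ r : Fin (i - j), (α r : ℕ) ≤ i - ((r : ℕ) + 1))
  else ∅



namespace Stmt14Aux

open Finset
open scoped Classical

/-! ### Counting helpers -/

lemma dc_card_le_iff {N : ℕ} (P : Fin N → Prop) [DecidablePred P]
    (hP : ∀ a b : Fin N, a ≤ b → P b → P a) (k : Fin N) :
    (Finset.univ.filter P).card ≤ (k : ℕ) ↔ ¬ P k := by
  constructor
  · intro h hPk
    have hsub : Finset.Iic k ⊆ Finset.univ.filter P := fun a ha => by
      rw [Finset.mem_Iic] at ha
      simp only [Finset.mem_filter, Finset.mem_univ, true_and]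
      exact hP a k ha hPk
    have h2 := Finset.card_le_card hsub
    rw [Fin.card_Iic] at h2
    omega
  · intro h
    have hsub : Finset.univ.filter P ⊆ Finset.Iio k := fun a ha => by
      rw [Finset.mem_filter] at ha
      rw [Finset.mem_Iio]
      by_contra hk
      exact h (hP k a (le_of_not_gt hk) ha.2)
    have h2 := Finset.card_le_card hsub
    rw [Fin.card_Iio] at h2
    omega

lemma card_filter_val_lt (d m : ℕ) :
    (Finset.univ.filter fun q : Fin d => (q : ℕ) < m).card = min d m := by
  rcases le_or_gt d m with h | h
  · rw [Finset.filter_true_of_mem (fun q _ => lt_of_lt_of_le q.isLt h)]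
    rw [Finset.card_univ, Fintype.card_fin]
    omega
  · have he : (Finset.univ.filter fun q : Fin d => (q : ℕ) < m)
        = Finset.Iio ⟨m, h⟩ := by
      ext q
      simp [Finset.mem_Iio, Fin.lt_def]
    rw [he, Fin.card_Iio]
    simp only [Fin.val_mk]
    omega

/-! ### Path basics -/

def yv (n : ℕ) (y : Fin (n + 1) → Fin (n + 1)) (k : ℕ) : ℕ :=
  y ⟨min k n, Nat.lt_succ_of_le (Nat.min_le_right k n)⟩

lemma yv_eq (n : ℕ) (y : Fin (n + 1) → Fin (n + 1)) {k : ℕ} (hk : k ≤ n) :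
    yv n y k = (y ⟨k, by omega⟩ : ℕ) := by
  simp [yv, Nat.min_eq_left hk]

lemma yv_coe (n : ℕ) (y : Fin (n + 1) → Fin (n + 1)) (k : Fin (n + 1)) :
    yv n y (k : ℕ) = (y k : ℕ) := by
  rw [yv_eq n y (Nat.lt_succ_iff.mp k.isLt)]

lemma yv_step (n : ℕ) (y : Fin (n + 1) → Fin (n + 1)) (hy : IsLPath n y) {k : ℕ}
    (hk : k < n) :
    (yv n y (k + 1) = yv n y k ∨ yv n y (k + 1) + 1 = yv n y k) ∧
      (yv n y (k + 1) + 1 = yv n y k → n - k ≤ yv n y k) := by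
  have h := hy ⟨k, hk⟩
  rw [yv_eq n y (by omega : k + 1 ≤ n), yv_eq n y (by omega : k ≤ n)]
  exact ⟨h.1.imp (fun e => congrArg Fin.val e) id, h.2⟩

lemma yv_anti (n : ℕ) (y : Fin (n + 1) → Fin (n + 1)) (hy : IsLPath n y)
    (a b : ℕ) (hab : a ≤ b) (hb : b ≤ n) : yv n y b ≤ yv n y a := by
  induction b with
  | zero =>
    obtain rfl : a = 0 := Nat.le_zero.mp hab
    exact le_rfl
  | succ b ih =>
    rcases Nat.eq_or_lt_of_le hab with rfl | h
    · exact le_rfl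
    · have h1 := ih (by omega) (by omega)
      have h2 := (yv_step n y hy (by omega : b < n)).1
      omega

lemma exists_step_down (n : ℕ) (y : Fin (n + 1) → Fin (n + 1)) (hy : IsLPath n y)
    (v : ℕ) (h1 : yv n y n ≤ v) (h2 : v < yv n y 0) :
    ∃ k, k < n ∧ yv n y (k + 1) = v ∧ yv n y k = v + 1 ∧ n ≤ v + 1 + k := by
  have hex : ∃ m, m ≤ n ∧ yv n y m ≤ v := ⟨n, le_rfl, h1⟩
  obtain ⟨k0, ⟨hk0n, hk0⟩, hmin⟩ :
      ∃ k0, (k0 ≤ n ∧ yv n y k0 ≤ v) ∧ ∀ m, m < k0 → ¬(m ≤ n ∧ yv n y m ≤ v) :=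
    ⟨Nat.find hex, Nat.find_spec hex, fun m hm => Nat.find_min hex hm⟩
  have hk0pos : 0 < k0 := by
    rcases Nat.eq_zero_or_pos k0 with h | h
    · rw [h] at hk0; omega
    · exact h
  have hprev : ¬(k0 - 1 ≤ n ∧ yv n y (k0 - 1) ≤ v) := hmin (k0 - 1) (by omega)
  have hprev' : v < yv n y (k0 - 1) := by
    by_contra hc
    exact hprev ⟨by omega, by omega⟩
  have hkn : k0 - 1 < n := by omega
  have hstep := yv_step n y hy hkn
  have hrw : k0 - 1 + 1 = k0 := by omega
  rw [hrw] at hstep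
  have hfall : yv n y k0 + 1 = yv n y (k0 - 1) := by
    rcases hstep.1 with h | h
    · omega
    · exact h
  have hcond := hstep.2 hfall
  refine ⟨k0 - 1, hkn, ?_, by omega, by omega⟩
  rw [hrw]
  omega

/-! ### Counting functions -/

open scoped Classical in
noncomputable def Dv (n : ℕ) (y : Fin (n + 1) → Fin (n + 1)) (v : ℕ) : ℕ :=
  (Finset.univ.filter fun k : Fin (n + 1) => v < (y k : ℕ)).card

open scoped Classical in
noncomputable def cV (n : ℕ) {dd N : ℕ} (α : Fin dd → Fin N) (m : ℕ) : ℕ :=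
  (Finset.univ.filter fun q => n - m ≤ (α q : ℕ)).card

lemma Dv_le_iff (n : ℕ) (y : Fin (n + 1) → Fin (n + 1)) (hy : IsLPath n y)
    (v m : ℕ) (hm : m ≤ n) : Dv n y v ≤ m ↔ yv n y m ≤ v := by
  have h := dc_card_le_iff (fun k : Fin (n + 1) => v < (y k : ℕ))
    (fun a b hab hb => by
      have h3 : (y b : ℕ) ≤ (y a : ℕ) := by
        have := yv_anti n y hy (a : ℕ) (b : ℕ) hab (Nat.lt_succ_iff.mp b.isLt)
        rwa [yv_coe, yv_coe] at this
      omega)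
    ⟨m, by omega⟩
  simp only [not_lt] at h
  rw [yv_eq n y hm]
  unfold Dv
  exact h

lemma Dv_le_card (n : ℕ) (y : Fin (n + 1) → Fin (n + 1)) (v : ℕ) : Dv n y v ≤ n + 1 := by
  refine le_trans (Finset.card_filter_le _ _) ?_
  simp

lemma cv_le_iff (n : ℕ) {dd N : ℕ} (α : Fin dd → Fin N) (hsa : StrictAnti α)
    (m : ℕ) (q : Fin dd) : cV n α m ≤ (q : ℕ) ↔ (α q : ℕ) < n - m := by
  have h := dc_card_le_iff (fun q' => n - m ≤ (α q' : ℕ))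
    (fun a b hab hb => le_trans hb (hsa.antitone hab)) q
  simp only [not_le] at h
  unfold cV
  exact h

lemma cv_le_card (n : ℕ) {dd N : ℕ} (α : Fin dd → Fin N) (m : ℕ) : cV n α m ≤ dd := by
  refine le_trans (Finset.card_filter_le _ _) ?_
  simp

lemma cv_zero (n : ℕ) {dd i : ℕ} (hi : i ≤ n) (hdd : dd ≤ i)
    (α : Fin dd → Fin (i + 1)) (hbd : ∀ q : Fin dd, (α q : ℕ) ≤ i - ((q : ℕ) + 1)) :
    cV n α 0 = 0 := by
  unfold cV
  rw [Finset.card_eq_zero, Finset.filter_eq_empty_iff]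
  intro q _
  have h1 := hbd q
  have h2 := q.isLt
  omega

lemma cv_top (n : ℕ) {dd N : ℕ} (α : Fin dd → Fin N) : cV n α n = dd := by
  unfold cV
  rw [Finset.filter_true_of_mem (fun q _ => by omega)]
  rw [Finset.card_univ, Fintype.card_fin]

lemma cv_step_no (n : ℕ) {dd N : ℕ} (α : Fin dd → Fin N) {k : ℕ} (hk : k < n)
    (hne : ∀ q : Fin dd, (α q : ℕ) ≠ n - 1 - k) : cV n α (k + 1) = cV n α k := by
  unfold cV
  refine congrArg Finset.card (Finset.filter_congr fun q _ => ?_)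
  have := hne q
  constructor <;> intro <;> omega

lemma cv_step_yes (n : ℕ) {dd N : ℕ} (α : Fin dd → Fin N) (hsa : StrictAnti α)
    {k : ℕ} (hk : k < n) (q0 : Fin dd) (hq0 : (α q0 : ℕ) = n - 1 - k) :
    cV n α k = (q0 : ℕ) ∧ cV n α (k + 1) = (q0 : ℕ) + 1 := by
  have hle : cV n α k ≤ (q0 : ℕ) := (cv_le_iff n α hsa k q0).mpr (by omega)
  have hge : (q0 : ℕ) ≤ cV n α k := by
    rcases Nat.eq_zero_or_pos (q0 : ℕ) with h | h
    · omega
    · have hlt : (⟨(q0 : ℕ) - 1, by omega⟩ : Fin dd) < q0 := by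
        rw [Fin.lt_def]; simp; omega
      have := hsa hlt
      rw [Fin.lt_def] at this
      have h2 := (cv_le_iff n α hsa k ⟨(q0 : ℕ) - 1, by omega⟩)
      simp only [Fin.val_mk] at h2 ⊢
      omega
  have hc1 : cV n α k = (q0 : ℕ) := le_antisymm hle hge
  have hge2 : ¬ (cV n α (k + 1) ≤ (q0 : ℕ)) := by
    rw [cv_le_iff n α hsa (k + 1) q0]
    omega
  have hle2 : cV n α (k + 1) ≤ (q0 : ℕ) + 1 := by
    rcases lt_or_ge ((q0 : ℕ) + 1) dd with h | h
    · have h2 := (cv_le_iff n α hsa (k + 1) ⟨(q0 : ℕ) + 1, h⟩)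
      simp only [Fin.val_mk] at h2
      have hlt : q0 < (⟨(q0 : ℕ) + 1, h⟩ : Fin dd) := by
        rw [Fin.lt_def]; simp
      have := hsa hlt
      rw [Fin.lt_def] at this
      omega
    · have := cv_le_card n α (k + 1)
      omega
  exact ⟨hc1, by omega⟩

/-! ### The two maps -/

open scoped Classical in
noncomputable def gmap (n dd i : ℕ) (hi : i ≤ n) (α : Fin dd → Fin (i + 1)) :
    Fin (n + 1) → Fin (n + 1) :=
  fun k => ⟨i - cV n α (k : ℕ), by omega⟩

open scoped Classical in
noncomputable def fmap (n dd i : ℕ) (y : Fin (n + 1) → Fin (n + 1)) :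
    Fin dd → Fin (i + 1) :=
  fun q => ⟨min i (n - Dv n y (i - (q : ℕ) - 1)), by omega⟩

lemma gmap_val (n dd i : ℕ) (hi : i ≤ n) (α : Fin dd → Fin (i + 1)) (k : Fin (n + 1)) :
    (gmap n dd i hi α k : ℕ) = i - cV n α (k : ℕ) := rfl

lemma fmap_val (n dd i : ℕ) (y : Fin (n + 1) → Fin (n + 1)) (q : Fin dd) :
    (fmap n dd i y q : ℕ) = min i (n - Dv n y (i - (q : ℕ) - 1)) := rfl

/-! ### gmap is a path -/

lemma gmap_isLPath (n dd i : ℕ) (hi : i ≤ n) (hdd : dd ≤ i)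
    (α : Fin dd → Fin (i + 1)) (hsa : StrictAnti α)
    (hbd : ∀ q : Fin dd, (α q : ℕ) ≤ i - ((q : ℕ) + 1)) :
    IsLPath n (gmap n dd i hi α) := by
  intro k
  have hk : (k : ℕ) < n := k.isLt
  by_cases hex : ∃ q : Fin dd, (α q : ℕ) = n - 1 - (k : ℕ)
  · obtain ⟨q0, hq0⟩ := hex
    obtain ⟨hc1, hc2⟩ := cv_step_yes n α hsa hk q0 hq0
    have hq0lt := q0.isLt
    constructor
    · right
      rw [gmap_val, gmap_val, Fin.val_succ, Fin.coe_castSucc, hc1, hc2]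
      omega
    · intro _
      rw [gmap_val, Fin.coe_castSucc, hc1]
      have := hbd q0
      omega
  · have hc := cv_step_no n α hk (fun q => not_exists.mp hex q)
    constructor
    · left
      apply Fin.ext
      rw [gmap_val, gmap_val, Fin.val_succ, Fin.coe_castSucc, hc]
    · intro hcon
      exfalso
      rw [gmap_val, gmap_val, Fin.val_succ, Fin.coe_castSucc, hc] at hcon
      omega

lemma gmap_zero (n dd i : ℕ) (hi : i ≤ n) (hdd : dd ≤ i)
    (α : Fin dd → Fin (i + 1))
    (hbd : ∀ q : Fin dd, (α q : ℕ) ≤ i - ((q : ℕ) + 1)) :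
    (gmap n dd i hi α 0 : ℕ) = i := by
  rw [gmap_val]
  rw [show ((0 : Fin (n + 1)) : ℕ) = 0 from rfl]
  rw [cv_zero n hi hdd α hbd]
  omega

lemma gmap_last (n dd i : ℕ) (hi : i ≤ n) (α : Fin dd → Fin (i + 1)) :
    (gmap n dd i hi α (Fin.last n) : ℕ) = i - dd := by
  rw [gmap_val, Fin.val_last, cv_top]

/-! ### weight of gmap -/

lemma gmap_weight {R : Type*} [CommRing R] (n dd i : ℕ) (hi : i ≤ n) (hdd : dd ≤ i)
    (t : ℕ → ℕ → R) (α : Fin dd → Fin (i + 1)) (hsa : StrictAnti α)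
    (hbd : ∀ q : Fin dd, (α q : ℕ) ≤ i - ((q : ℕ) + 1)) :
    linvweight n t (gmap n dd i hi α) =
      (-1 : R) ^ dd * ∏ q : Fin dd, t (i - (q : ℕ)) ((α q : ℕ)) := by
  have key : ∀ k : Fin n,
      (if (gmap n dd i hi α k.succ : ℕ) + 1 = (gmap n dd i hi α k.castSucc : ℕ)
        then -t (gmap n dd i hi α k.castSucc : ℕ) (n - (k : ℕ) - 1) else 1)
      = ∏ q : Fin dd,
          (if n - 1 - (α q : ℕ) = (k : ℕ)
            then -t (i - (q : ℕ)) ((α q : ℕ)) else 1) := by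
    intro k
    have hk : (k : ℕ) < n := k.isLt
    by_cases hex : ∃ q : Fin dd, (α q : ℕ) = n - 1 - (k : ℕ)
    · obtain ⟨q0, hq0⟩ := hex
      obtain ⟨hc1, hc2⟩ := cv_step_yes n α hsa hk q0 hq0
      have hq0lt := q0.isLt
      have hcond : (gmap n dd i hi α k.succ : ℕ) + 1 = (gmap n dd i hi α k.castSucc : ℕ) := by
        rw [gmap_val, gmap_val, Fin.val_succ, Fin.coe_castSucc, hc1, hc2]
        omega
      have hL : (if (gmap n dd i hi α k.succ : ℕ) + 1 = (gmap n dd i hi α k.castSucc : ℕ)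
          then -t (gmap n dd i hi α k.castSucc : ℕ) (n - (k : ℕ) - 1) else 1)
          = -t (i - (q0 : ℕ)) ((α q0 : ℕ)) := by
        rw [if_pos hcond, gmap_val, Fin.coe_castSucc, hc1,
          show n - (k : ℕ) - 1 = (α q0 : ℕ) by omega]
      have hothers : ∀ q ∈ Finset.univ, q ≠ q0 →
          (if n - 1 - (α q : ℕ) = (k : ℕ)
            then -t (i - (q : ℕ)) ((α q : ℕ)) else 1) = 1 := by
        intro q _ hq
        apply if_neg
        intro hcon
        apply hq
        apply hsa.injective
        apply Fin.ext
        have h1 := hbd q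
        have h2 := q.isLt
        omega
      rw [hL, Finset.prod_eq_single_of_mem q0 (Finset.mem_univ q0) hothers,
        if_pos (show n - 1 - (α q0 : ℕ) = (k : ℕ) by omega)]
    · have hc := cv_step_no n α hk (fun q => not_exists.mp hex q)
      have hcond : ¬ ((gmap n dd i hi α k.succ : ℕ) + 1
          = (gmap n dd i hi α k.castSucc : ℕ)) := by
        rw [gmap_val, gmap_val, Fin.val_succ, Fin.coe_castSucc, hc]
        omega
      rw [if_neg hcond, Finset.prod_eq_one]
      intro q _
      apply if_neg
      intro hcon
      have h1 := hbd q
      have h2 := q.isLt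
      exact (not_exists.mp hex q) (by omega)
  rw [linvweight]
  rw [Finset.prod_congr rfl (fun k _ => key k)]
  rw [Finset.prod_comm]
  have step2 : ∀ q : Fin dd,
      (∏ k : Fin n, if n - 1 - (α q : ℕ) = (k : ℕ)
          then -t (i - (q : ℕ)) ((α q : ℕ)) else 1)
        = -t (i - (q : ℕ)) ((α q : ℕ)) := by
    intro q
    have hlt : n - 1 - (α q : ℕ) < n := by
      have := q.isLt
      omega
    have hothers : ∀ b ∈ Finset.univ, b ≠ (⟨n - 1 - (α q : ℕ), hlt⟩ : Fin n) →
        (if n - 1 - (α q : ℕ) = (b : ℕ)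
          then -t (i - (q : ℕ)) ((α q : ℕ)) else 1) = 1 := by
      intro b _ hb
      apply if_neg
      intro hcon
      exact hb (Fin.ext hcon.symm)
    rw [Finset.prod_eq_single_of_mem _ (Finset.mem_univ _) hothers, if_pos rfl]
  rw [Finset.prod_congr rfl (fun q _ => step2 q)]
  rw [show (fun q : Fin dd => -t (i - (q : ℕ)) ((α q : ℕ)))
      = fun q : Fin dd => (-1) * t (i - (q : ℕ)) ((α q : ℕ)) from
    funext fun q => (neg_one_mul _).symm]
  rw [Finset.prod_mul_distrib, Finset.prod_const, Finset.card_univ, Fintype.card_fin]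

/-! ### Dv bounds for a path -/

lemma Dv_bounds (n i j : ℕ) (y : Fin (n + 1) → Fin (n + 1)) (hy : IsLPath n y)
    (h0 : yv n y 0 = i) (hn : yv n y n = j) (v : ℕ) (hv1 : j ≤ v) (hv2 : v < i) :
    n - v ≤ Dv n y v ∧ Dv n y v ≤ n ∧ yv n y (Dv n y v) = v := by
  obtain ⟨k, hk, h1, h2, h3⟩ := exists_step_down n y hy v (by omega) (by omega)
  have e1 : Dv n y v ≤ k + 1 := (Dv_le_iff n y hy v (k + 1) (by omega)).mpr (by omega)
  have e2 : ¬ (Dv n y v ≤ k) := by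
    intro h
    have := (Dv_le_iff n y hy v k (by omega)).mp h
    omega
  have heq : Dv n y v = k + 1 := by omega
  rw [heq]
  exact ⟨by omega, by omega, h1⟩

/-! ### fmap lands in QSD -/

lemma fmap_props (n dd i j : ℕ) (hi : i ≤ n) (hdd : dd = i - j) (hji : j ≤ i)
    (y : Fin (n + 1) → Fin (n + 1)) (hy : IsLPath n y)
    (h0 : yv n y 0 = i) (hn : yv n y n = j) :
    (∀ q : Fin dd, (fmap n dd i y q : ℕ) = n - Dv n y (i - (q : ℕ) - 1)) ∧
    (∀ q : Fin dd, (fmap n dd i y q : ℕ) ≤ i - ((q : ℕ) + 1)) ∧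
    StrictAnti (fmap n dd i y) := by
  have hDb : ∀ q : Fin dd, n - (i - (q : ℕ) - 1) ≤ Dv n y (i - (q : ℕ) - 1) ∧
      Dv n y (i - (q : ℕ) - 1) ≤ n ∧ yv n y (Dv n y (i - (q : ℕ) - 1)) = i - (q : ℕ) - 1 := by
    intro q
    have hq := q.isLt
    exact Dv_bounds n i j y hy h0 hn (i - (q : ℕ) - 1) (by omega) (by omega)
  have hval : ∀ q : Fin dd, (fmap n dd i y q : ℕ) = n - Dv n y (i - (q : ℕ) - 1) := by
    intro q
    have := hDb q
    rw [fmap_val]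
    omega
  have hbd : ∀ q : Fin dd, (fmap n dd i y q : ℕ) ≤ i - ((q : ℕ) + 1) := by
    intro q
    have := hDb q
    rw [hval q]
    omega
  refine ⟨hval, hbd, ?_⟩
  intro q q' hlt
  rw [Fin.lt_def] at hlt ⊢
  rw [hval q, hval q']
  have hq := q.isLt
  have hq' := q'.isLt
  have hb1 := hDb q
  have hb2 := hDb q'
  have hmono : Dv n y (i - (q : ℕ) - 1) < Dv n y (i - (q' : ℕ) - 1) := by
    by_contra hc
    have hle : Dv n y (i - (q' : ℕ) - 1) ≤ Dv n y (i - (q : ℕ) - 1) := by omega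
    have := (Dv_le_iff n y hy (i - (q' : ℕ) - 1) (Dv n y (i - (q : ℕ) - 1)) (by omega)).mp hle
    omega
  omega

/-! ### gmap ∘ fmap = id on paths -/

lemma gmap_fmap (n dd i j : ℕ) (hi : i ≤ n) (hdd : dd = i - j) (hji : j ≤ i)
    (y : Fin (n + 1) → Fin (n + 1)) (hy : IsLPath n y)
    (h0 : yv n y 0 = i) (hn : yv n y n = j) :
    gmap n dd i hi (fmap n dd i y) = y := by
  obtain ⟨hval, hbd, hsa⟩ := fmap_props n dd i j hi hdd hji y hy h0 hn
  funext k
  apply Fin.ext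
  rw [gmap_val]
  have hyk_le : (y k : ℕ) ≤ i := by
    have := yv_anti n y hy 0 (k : ℕ) (by omega) (by omega)
    rw [yv_coe] at this
    omega
  have hyk_ge : j ≤ (y k : ℕ) := by
    have := yv_anti n y hy (k : ℕ) n (by omega) le_rfl
    rw [yv_coe] at this
    omega
  have hcv : cV n (fmap n dd i y) (k : ℕ) = i - (y k : ℕ) := by
    unfold cV
    have hfc : (Finset.univ.filter fun q : Fin dd => n - (k : ℕ) ≤ (fmap n dd i y q : ℕ))
        = Finset.univ.filter fun q : Fin dd => (q : ℕ) < i - (y k : ℕ) := by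
      refine Finset.filter_congr fun q _ => ?_
      have hq := q.isLt
      have hb := hbd q
      rw [hval q]
      have hDb := Dv_bounds n i j y hy h0 hn (i - (q : ℕ) - 1) (by omega) (by omega)
      have hDle : Dv n y (i - (q : ℕ) - 1) ≤ (k : ℕ) ↔ (y k : ℕ) ≤ i - (q : ℕ) - 1 := by
        rw [← yv_coe n y k]
        exact Dv_le_iff n y hy (i - (q : ℕ) - 1) (k : ℕ) (by omega)
      have hk := k.isLt
      constructor <;> intro <;> omega
    rw [hfc, card_filter_val_lt]
    omega
  rw [hcv]
  omega

/-! ### fmap ∘ gmap = id on QSD -/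

lemma fmap_gmap (n dd i : ℕ) (hi : i ≤ n) (hdd : dd ≤ i)
    (α : Fin dd → Fin (i + 1)) (hsa : StrictAnti α)
    (hbd : ∀ q : Fin dd, (α q : ℕ) ≤ i - ((q : ℕ) + 1)) :
    fmap n dd i (gmap n dd i hi α) = α := by
  funext q
  apply Fin.ext
  have hq := q.isLt
  have hb := hbd q
  have hDv : Dv n (gmap n dd i hi α) (i - (q : ℕ) - 1) = n - (α q : ℕ) := by
    unfold Dv
    have hfc : (Finset.univ.filter fun k : Fin (n + 1) =>
          i - (q : ℕ) - 1 < (gmap n dd i hi α k : ℕ))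
        = Finset.univ.filter fun k : Fin (n + 1) => (k : ℕ) < n - (α q : ℕ) := by
      refine Finset.filter_congr fun k _ => ?_
      rw [gmap_val]
      have hc := cv_le_iff n α hsa (k : ℕ) q
      have hcle := cv_le_card n α (k : ℕ)
      have hk := k.isLt
      constructor <;> intro <;> omega
    rw [hfc, card_filter_val_lt]
    omega
  rw [fmap_val, hDv]
  omega

end Stmt14Aux



/-- Closed-form formula for the entries of `L⁻¹`:
`L⁻¹ [i, j] = (-1)^(i-j) * ∑_{α ∈ Q^{SD}_{i,j}} ∏_{s=j}^{i-1} t (s+1) (α (i-s))`, the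
product being reindexed by `q = i - s - 1 ∈ {0, …, i-j-1}` (zero-indexed), so the factor
for `q` is `t (i - q) (α q)`.  (For `i < j` both sides vanish, so the natural
subtraction in the exponent of `-1` is harmless.) -/
theorem stmt14 {R : Type*} [CommRing R] (n : ℕ) (t : ℕ → ℕ → R) (i j : Fin (n + 1)) :
    LinvMat n t i j =
      (-1 : R) ^ ((i : ℕ) - (j : ℕ)) *
        ∑ α ∈ QSDset (i : ℕ) (j : ℕ),
          ∏ q : Fin ((i : ℕ) - (j : ℕ)), t ((i : ℕ) - (q : ℕ)) (α q : ℕ) := by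
  classical
  simp only [LinvMat, Matrix.of_apply]
  rcases le_or_gt (j : ℕ) (i : ℕ) with hji | hij
  · have hi : (i : ℕ) ≤ n := Fin.is_le i
    have hddle : (i : ℕ) - (j : ℕ) ≤ (i : ℕ) := Nat.sub_le _ _
    rw [Finset.mul_sum]
    refine (Finset.sum_bij'
      (fun α _ => Stmt14Aux.gmap n ((i : ℕ) - (j : ℕ)) (i : ℕ) hi α)
      (fun y _ => Stmt14Aux.fmap n ((i : ℕ) - (j : ℕ)) (i : ℕ) y)
      ?_ ?_ ?_ ?_ ?_).symm
    · intro α hα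
      rw [QSDset, if_pos hji, Finset.mem_filter] at hα
      obtain ⟨-, hsa, hbd⟩ := hα
      rw [Finset.mem_filter]
      refine ⟨Finset.mem_univ _, Stmt14Aux.gmap_isLPath n _ _ hi hddle α hsa hbd, ?_, ?_⟩
      · apply Fin.ext
        rw [Stmt14Aux.gmap_zero n _ _ hi hddle α hbd]
      · apply Fin.ext
        rw [Stmt14Aux.gmap_last n _ _ hi α]
        omega
    · intro y hy
      rw [Finset.mem_filter] at hy
      obtain ⟨-, hp, h0, hn⟩ := hy
      have h0' : Stmt14Aux.yv n y 0 = (i : ℕ) := by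
        have h := Stmt14Aux.yv_coe n y 0
        rw [h0] at h
        simpa using h
      have hn' : Stmt14Aux.yv n y n = (j : ℕ) := by
        have h := Stmt14Aux.yv_coe n y (Fin.last n)
        rw [hn] at h
        simpa using h
      obtain ⟨hval, hbd, hsa⟩ :=
        Stmt14Aux.fmap_props n ((i : ℕ) - (j : ℕ)) (i : ℕ) (j : ℕ) hi rfl hji y hp h0' hn'
      rw [QSDset, if_pos hji, Finset.mem_filter]
      exact ⟨Finset.mem_univ _, hsa, fun q => hbd q⟩
    · intro α hα
      rw [QSDset, if_pos hji, Finset.mem_filter] at hα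
      exact Stmt14Aux.fmap_gmap n _ _ hi hddle α hα.2.1 hα.2.2
    · intro y hy
      rw [Finset.mem_filter] at hy
      obtain ⟨-, hp, h0, hn⟩ := hy
      have h0' : Stmt14Aux.yv n y 0 = (i : ℕ) := by
        have h := Stmt14Aux.yv_coe n y 0
        rw [h0] at h
        simpa using h
      have hn' : Stmt14Aux.yv n y n = (j : ℕ) := by
        have h := Stmt14Aux.yv_coe n y (Fin.last n)
        rw [hn] at h
        simpa using h
      exact Stmt14Aux.gmap_fmap n ((i : ℕ) - (j : ℕ)) (i : ℕ) (j : ℕ) hi rfl hji y hp h0' hn'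
    · intro α hα
      rw [QSDset, if_pos hji, Finset.mem_filter] at hα
      exact (Stmt14Aux.gmap_weight n _ _ hi hddle t α hα.2.1 hα.2.2).symm
  · rw [QSDset, if_neg (by omega), Finset.sum_empty, mul_zero]
    rw [Finset.filter_false_of_mem, Finset.sum_empty]
    rintro y - ⟨hp, h0, hn⟩
    have ha := Stmt14Aux.yv_anti n y hp 0 n (by omega) le_rfl
    have h0' : Stmt14Aux.yv n y 0 = (i : ℕ) := by
      have h := Stmt14Aux.yv_coe n y 0
      rw [h0] at h
      simpa using h
    have hn' : Stmt14Aux.yv n y n = (j : ℕ) := by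
      have h := Stmt14Aux.yv_coe n y (Fin.last n)
      rw [hn] at h
      simpa using h
    omega
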